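/- With l(n) = (c(2n) − 1)/4, the limit as n → ∞ of l(2n+1)/l(2n) equals 5. -/
import Mathlib

def c (n : Nat) : Nat := ∑ i ∈ Finset.range (n+1), (Nat.choose n i % 2) * 2^i

def F (k : Nat) : Nat := 2^(2^k) + 1

noncomputable def l (n : Nat) : ℝ := ((c (2*n) : ℝ) - 1) / 4

def S (b n : Nat) : Nat := ∑ i ∈ Finset.range (n+1), (Nat.choose n i % 2) * b^i

lemma c_eq_S (n : Nat) : c n = S 2 n := rfl

instance : Fact (Nat.Prime 2) := ⟨Nat.prime_two⟩

lemma choose_mod_two (n k r s : ℕ) (hr : r < 2) (hs : s < 2) :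
    Nat.choose (2*n + r) (2*k + s) % 2 = (Nat.choose r s * Nat.choose n k) % 2 := by
  have h := @Choose.choose_modEq_choose_mod_mul_choose_div_nat (2*n+r) (2*k+s) 2 _
  have h1 : (2*n+r) % 2 = r := by omega
  have h2 : (2*k+s) % 2 = s := by omega
  have h3 : (2*n+r) / 2 = n := by omega
  have h4 : (2*k+s) / 2 = k := by omega
  rw [h1, h2, h3, h4] at h
  exact h

lemma sum_range_two_mul (n : ℕ) (f : ℕ → ℕ) :
    ∑ i ∈ Finset.range (2*n), f i = ∑ j ∈ Finset.range n, (f (2*j) + f (2*j+1)) := by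
  induction n with
  | zero => simp
  | succ n ih =>
      rw [Finset.sum_range_succ, ← ih, Nat.mul_succ]
      rw [show 2*n+2 = (2*n+1)+1 from rfl, Finset.sum_range_succ, Finset.sum_range_succ]
      ring

lemma S_even (b n : ℕ) : S b (2*n) = S (b*b) n := by
  unfold S
  have hz : Nat.choose (2*n) (2*n+1) % 2 * b^(2*n+1) = 0 := by
    rw [Nat.choose_eq_zero_of_lt (by omega)]
    simp
  have h5 : ∑ i ∈ Finset.range (2*(n+1)), Nat.choose (2*n) i % 2 * b^i
      = ∑ i ∈ Finset.range (2*n+1), Nat.choose (2*n) i % 2 * b^i := by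
    rw [show 2*(n+1) = (2*n+1)+1 from by ring, Finset.sum_range_succ, hz, add_zero]
  rw [← h5, sum_range_two_mul]
  refine Finset.sum_congr rfl fun j hj => ?_
  have he : Nat.choose (2*n) (2*j) % 2 = Nat.choose n j % 2 := by
    have := choose_mod_two n j 0 0 (by norm_num) (by norm_num)
    simpa using this
  have ho : Nat.choose (2*n) (2*j+1) % 2 = 0 := by
    have := choose_mod_two n j 0 1 (by norm_num) (by norm_num)
    simpa using this
  rw [he, ho, pow_mul]
  ring

lemma S_odd (b n : ℕ) : S b (2*n+1) = (1+b) * S (b*b) n := by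
  unfold S
  rw [show 2*n+1+1 = 2*(n+1) from by ring, sum_range_two_mul, Finset.mul_sum]
  refine Finset.sum_congr rfl fun j hj => ?_
  have he : Nat.choose (2*n+1) (2*j) % 2 = Nat.choose n j % 2 := by
    have := choose_mod_two n j 1 0 (by norm_num) (by norm_num)
    simpa using this
  have ho : Nat.choose (2*n+1) (2*j+1) % 2 = Nat.choose n j % 2 := by
    have := choose_mod_two n j 1 1 (by norm_num) (by norm_num)
    simpa using this
  rw [he, ho, pow_mul, pow_succ]
  ring

lemma key (n : ℕ) : c (2*(2*n+1)) = 5 * c (2*(2*n)) := by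
  rw [c_eq_S, c_eq_S, S_even, S_even, S_odd, S_even]

lemma c_ge (m : ℕ) : 2^m ≤ c m := by
  unfold c
  rw [Finset.sum_range_succ, Nat.choose_self]
  simp

theorem stmt12 :
    Filter.Tendsto (fun n : Nat => l (2*n+1) / l (2*n)) Filter.atTop (nhds 5) := by
  have hmul : Filter.Tendsto (fun n : Nat => 2*(2*n)) Filter.atTop Filter.atTop := by
    apply Filter.tendsto_atTop_atTop.mpr
    intro b
    exact ⟨b, fun a ha => by omega⟩
  have hP : Filter.Tendsto (fun n : Nat => (c (2*(2*n)) : ℝ) - 1) Filter.atTop Filter.atTop := by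
    apply Filter.tendsto_atTop_mono (fun n => ?_)
      (Filter.tendsto_atTop_add_const_right _ (-1)
        ((tendsto_pow_atTop_atTop_of_one_lt (by norm_num : (1:ℝ) < 2)).comp hmul))
    have h1 : (2:ℝ)^(2*(2*n)) ≤ (c (2*(2*n)) : ℝ) := by exact_mod_cast c_ge (2*(2*n))
    simp only [Function.comp]
    linarith
  have hlim : Filter.Tendsto (fun n : Nat => 5 + 4 / ((c (2*(2*n)) : ℝ) - 1))
      Filter.atTop (nhds 5) := by
    have := Filter.Tendsto.div_atTop (tendsto_const_nhds (x := (4:ℝ))) hP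
    simpa using (tendsto_const_nhds (x := (5:ℝ))).add this
  apply hlim.congr'
  filter_upwards [Filter.eventually_ge_atTop 1] with n hn
  have hP1 : (2:ℝ)^(2*(2*n)) ≤ (c (2*(2*n)) : ℝ) := by exact_mod_cast c_ge (2*(2*n))
  have h16 : (16:ℝ) ≤ (c (2*(2*n)) : ℝ) := by
    have : (16:ℝ) ≤ (2:ℝ)^(2*(2*n)) := by
      calc (16:ℝ) = 2^4 := by norm_num
      _ ≤ 2^(2*(2*n)) := by
        apply pow_le_pow_right₀ (by norm_num)
        omega
    linarith
  have hne : (c (2*(2*n)) : ℝ) - 1 ≠ 0 := by linarith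
  unfold l
  rw [key n]
  push_cast
  field_simp
  ring
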